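/- Let W, V, Y be discrete random variables with Markov chain W → V → Y, and suppose H(V) = n(R + R^c), H(V | W, Y) ≤ nε₁, H(Y | V) ≥ nH₀ - nε₂, and H(Y) ≤ nH₁ + nε₃ with H₁ - H₀ ≤ R^c. Then H(W | Y) ≥ H(W) - n(ε₁+ε₂+ε₃) - n(H₁ - H₀ - R^c) ≥ nR - n(ε₁+ε₂+ε₃), provided H(W) = nR and W is determined together with a confusion index by V. -/

import Mathlib

open MeasureTheory

/-- Shannon entropy of a random variable with values in a finite type. -/
noncomputable def entropy {Ω α : Type*} [MeasurableSpace Ω] [Fintype α]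
    (μ : Measure Ω) (X : Ω → α) : ℝ :=
  ∑ a, Real.negMulLog ((μ (X ⁻¹' {a})).toReal)

/-- Conditional Shannon entropy `H(X | Y) = H(X, Y) - H(Y)`. -/
noncomputable def condEntropy {Ω α β : Type*} [MeasurableSpace Ω]
    [Fintype α] [Fintype β] (μ : Measure Ω) (X : Ω → α) (Y : Ω → β) : ℝ :=
  entropy μ (fun ω => (X ω, Y ω)) - entropy μ Y

/- Since `V` determines `W`, the pair `(V, (W, Y))` carries the same information as `(Y, V)`, so
`H(W | Y) = H(V) + H(Y | V) - H(V | W, Y) - H(Y)` is an identity of entropies; the four bounds on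
the right-hand side then give the estimate by linear arithmetic. -/

section

variable {Ω α β : Type*} [MeasurableSpace Ω] (μ : Measure Ω)

lemma entropy_comp_injective [Fintype α] [Fintype β] (X : Ω → α) {φ : α → β}
    (hφ : Function.Injective φ) :
    entropy μ (fun ω => φ (X ω)) = entropy μ X := by
  classical
  set f : β → ℝ := fun b => Real.negMulLog (μ ((fun ω => φ (X ω)) ⁻¹' {b})).toReal
  have preimage_off_range : ∀ b ∉ Finset.univ.image φ, (fun ω => φ (X ω)) ⁻¹' {b} = ∅ := by
    intro b hb
    ext ω
    simp only [Set.mem_preimage, Set.mem_singleton_iff, Set.mem_empty_iff_false, iff_false]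
    exact fun h => hb (Finset.mem_image.mpr ⟨X ω, Finset.mem_univ _, h⟩)
  have preimage_image : ∀ a, (fun ω => φ (X ω)) ⁻¹' {φ a} = X ⁻¹' {a} := by
    intro a
    ext ω
    simp [hφ.eq_iff]
  calc ∑ b, f b
      = ∑ b ∈ Finset.univ.image φ, f b :=
        (Finset.sum_subset (Finset.subset_univ _) fun b _ hb => by
          simp [f, preimage_off_range b hb]).symm
    _ = ∑ a, f (φ a) := Finset.sum_image fun a _ b _ h => hφ h
    _ = entropy μ X := by simp only [f, preimage_image, entropy]

variable {γ : Type*} [Fintype α] [Fintype β] [Fintype γ]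

lemma condEntropy_eq_of_eq_comp (W : Ω → α) (V : Ω → β) (Y : Ω → γ) {f : β → α}
    (hf : ∀ ω, W ω = f (V ω)) :
    condEntropy μ W Y
      = entropy μ V + condEntropy μ Y V - condEntropy μ V (fun ω => (W ω, Y ω))
        - entropy μ Y := by
  have hVWY : entropy μ (fun ω => (V ω, (W ω, Y ω))) = entropy μ (fun ω => (Y ω, V ω)) := by
    rw [← entropy_comp_injective μ (fun ω => (Y ω, V ω))
      (φ := fun p : γ × β => (p.2, (f p.2, p.1)))
      fun p q h => by simp only [Prod.mk.injEq] at h; exact Prod.ext h.2.2 h.1]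
    simp only [hf]
  unfold condEntropy
  rw [hVWY]
  ring

end

theorem stmt17_general {Ω 𝒲 𝒱 𝒴 𝒞 : Type*} [MeasurableSpace Ω]
    [Fintype 𝒲] [Fintype 𝒱] [Fintype 𝒴]
    (μ : Measure Ω)
    (W : Ω → 𝒲) (V : Ω → 𝒱) (Y : Ω → 𝒴) (C : Ω → 𝒞)
    (n R Rc ε₁ ε₂ ε₃ H₀ H₁ : ℝ) (hn : 0 < n)
    (hdet : ∃ g : 𝒱 → 𝒲 × 𝒞, ∀ ω, (W ω, C ω) = g (V ω))
    (hV : entropy μ V = n * (R + Rc))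
    (hFano : condEntropy μ V (fun ω => (W ω, Y ω)) ≤ n * ε₁)
    (hYgV : condEntropy μ Y V ≥ n * H₀ - n * ε₂)
    (hY : entropy μ Y ≤ n * H₁ + n * ε₃)
    (hRc : H₁ - H₀ ≤ Rc)
    (hW : entropy μ W = n * R) :
    condEntropy μ W Y
        ≥ entropy μ W - n * (ε₁ + ε₂ + ε₃) - n * (H₁ - H₀ - Rc)
    ∧ entropy μ W - n * (ε₁ + ε₂ + ε₃) - n * (H₁ - H₀ - Rc)
        ≥ n * R - n * (ε₁ + ε₂ + ε₃) := by
  obtain ⟨g, hg⟩ := hdet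
  have hequiv := condEntropy_eq_of_eq_comp μ W V Y (f := fun v => (g v).1)
    fun ω => congrArg Prod.fst (hg ω)
  have hslack : n * (H₁ - H₀ - Rc) ≤ 0 :=
    mul_nonpos_of_nonneg_of_nonpos hn.le (by linarith)
  constructor
  · rw [hequiv, hW]
    linarith
  · linarith

/-- Skeleton of the equivocation computation: with Markov chain `W → V → Y`,
`V` determining `W` together with a confusion index, `H(V) = n(R + Rᶜ)`,
`H(V | W, Y) ≤ n ε₁`, `H(Y | V) ≥ n H₀ - n ε₂`, `H(Y) ≤ n H₁ + n ε₃`,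
`H₁ - H₀ ≤ Rᶜ` and `H(W) = n R`, we get
`H(W | Y) ≥ H(W) - n(ε₁+ε₂+ε₃) - n(H₁ - H₀ - Rᶜ) ≥ n R - n(ε₁+ε₂+ε₃)`. -/
theorem stmt17 {Ω 𝒲 𝒱 𝒴 𝒞 : Type*} [MeasurableSpace Ω]
    [Fintype 𝒲] [Fintype 𝒱] [Fintype 𝒴] [Fintype 𝒞]
    (μ : Measure Ω) [IsProbabilityMeasure μ]
    (W : Ω → 𝒲) (V : Ω → 𝒱) (Y : Ω → 𝒴) (C : Ω → 𝒞)
    (n R Rc ε₁ ε₂ ε₃ H₀ H₁ : ℝ) (hn : 0 < n)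
    (hMarkov : ∀ w v y,
      (μ {ω | W ω = w ∧ V ω = v ∧ Y ω = y}).toReal
          * (μ {ω | V ω = v}).toReal
        = (μ {ω | W ω = w ∧ V ω = v}).toReal
          * (μ {ω | V ω = v ∧ Y ω = y}).toReal)
    (hdet : ∃ g : 𝒱 → 𝒲 × 𝒞, ∀ ω, (W ω, C ω) = g (V ω))
    (hV : entropy μ V = n * (R + Rc))
    (hFano : condEntropy μ V (fun ω => (W ω, Y ω)) ≤ n * ε₁)
    (hYgV : condEntropy μ Y V ≥ n * H₀ - n * ε₂)
    (hY : entropy μ Y ≤ n * H₁ + n * ε₃)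
    (hRc : H₁ - H₀ ≤ Rc)
    (hW : entropy μ W = n * R) :
    condEntropy μ W Y
        ≥ entropy μ W - n * (ε₁ + ε₂ + ε₃) - n * (H₁ - H₀ - Rc)
    ∧ entropy μ W - n * (ε₁ + ε₂ + ε₃) - n * (H₁ - H₀ - Rc)
        ≥ n * R - n * (ε₁ + ε₂ + ε₃) :=
  stmt17_general μ W V Y C n R Rc ε₁ ε₂ ε₃ H₀ H₁ hn hdet hV hFano hYgV hY hRc hW
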